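/- The language E' = {cᵐ u b aⁿ bⁿ | m, n > 0, u ∈ {a,b}^{m−1}} over {a,b,c} is accepted by a history-deterministic Parikh automaton but not by any deterministic Parikh automaton. -/

import Mathlib

open scoped BigOperators

/-- A set `C ⊆ ℕ^d` is linear if `C = {v₀ + Σᵢ cᵢ vᵢ | cᵢ ∈ ℕ}` for some vectors. -/
def IsLinear {d : ℕ} (C : Set (Fin d → ℕ)) : Prop :=
  ∃ (k : ℕ) (v₀ : Fin d → ℕ) (v : Fin k → Fin d → ℕ),
    C = {x | ∃ c : Fin k → ℕ, x = v₀ + ∑ i, c i • v i}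

/-- A set is semilinear if it is a finite union of linear sets. -/
def IsSemilinear {d : ℕ} (C : Set (Fin d → ℕ)) : Prop :=
  ∃ (m : ℕ) (Cs : Fin m → Set (Fin d → ℕ)),
    (∀ i, IsLinear (Cs i)) ∧ C = ⋃ i, Cs i

/-- A Parikh automaton over alphabet `A` of dimension `d`: an NFA whose transitions are
labeled by a letter and a vector in `ℕ^d`, together with a semilinear acceptance set `C`. -/
structure PA (A : Type) (d : ℕ) where
  n : ℕ
  init : Fin n
  final : Set (Fin n)
  trans : Set (Fin n × (A × (Fin d → ℕ)) × Fin n)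
  transFin : trans.Finite
  C : Set (Fin d → ℕ)
  hC : IsSemilinear C

namespace PA

variable {A : Type} {d : ℕ}

/-- The type of transitions of a Parikh automaton. -/
abbrev Tr (P : PA A d) := Fin P.n × (A × (Fin d → ℕ)) × Fin P.n

/-- The word processed by a run (its Σ-projection). -/
def word (P : PA A d) (ρ : List P.Tr) : List A := ρ.map (fun t => t.2.1.1)

/-- The extended Parikh image of a run: the sum of the vector labels. -/
def image (P : PA A d) (ρ : List P.Tr) : Fin d → ℕ := (ρ.map (fun t => t.2.1.2)).sum

/-- The last state of a run (the initial state for the empty run). -/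
def lastState (P : PA A d) (ρ : List P.Tr) : Fin P.n :=
  (ρ.getLast?).elim P.init (fun t => t.2.2)

/-- A run: a sequence of transitions of `P`, consecutively matching, starting in the
initial state. -/
def IsRun (P : PA A d) (ρ : List P.Tr) : Prop :=
  (∀ t ∈ ρ, t ∈ P.trans) ∧
  ρ.Chain' (fun t t' => t.2.2 = t'.1) ∧
  (∀ t, ρ.head? = some t → t.1 = P.init)

/-- An accepting run: a run ending in an accepting state whose extended Parikh image
lies in `C`. -/
def Accepting (P : PA A d) (ρ : List P.Tr) : Prop :=
  P.IsRun ρ ∧ P.lastState ρ ∈ P.final ∧ P.image ρ ∈ P.C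

/-- The language of a Parikh automaton. -/
def Lang (P : PA A d) : Set (List A) :=
  {w | ∃ ρ, P.Accepting ρ ∧ P.word ρ = w}

/-- Determinism: for every state and letter there is at most one outgoing transition. -/
def Deterministic (P : PA A d) : Prop :=
  ∀ (q : Fin P.n) (a : A),
    Set.Subsingleton {p : Fin P.n × (Fin d → ℕ) | (q, (a, p.2), p.1) ∈ P.trans}

/-- Iterating a resolver `r` (fed the history and the next letter) along a word;
`pre` is the prefix read so far. -/
def iterResAux (P : PA A d) (r : List A → A → P.Tr) : List A → List A → List P.Tr
  | _, [] => []
  | pre, a :: rest => r pre a :: P.iterResAux r (pre ++ [a]) rest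

/-- The run built by iterating the resolver `r` letter by letter along `w`. -/
def iterRes (P : PA A d) (r : List A → A → P.Tr) (w : List A) : List P.Tr :=
  P.iterResAux r [] w

/-- `r` is a resolver: for every accepted word `w`, iterating `r` along `w` yields an
accepting run processing `w`. -/
def IsResolver (P : PA A d) (r : List A → A → P.Tr) : Prop :=
  ∀ w ∈ P.Lang, P.Accepting (P.iterRes r w) ∧ P.word (P.iterRes r w) = w

/-- A Parikh automaton is history-deterministic if it has a resolver. -/
def HistoryDeterministic (P : PA A d) : Prop := ∃ r, P.IsResolver r

end PA

/-- The three-letter alphabet `{a, b, c}`. -/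
inductive ABC where
  | a : ABC
  | b : ABC
  | c : ABC
deriving DecidableEq

/-- The language `E' = {cᵐ u b aⁿ bⁿ | m, n > 0, u ∈ {a,b}^{m-1}}`. -/
def E'Lang : Set (List ABC) :=
  {w | ∃ (m n : ℕ) (u : List ABC), 0 < m ∧ 0 < n ∧
    u.length = m - 1 ∧ (∀ x ∈ u, x ≠ ABC.c) ∧
    w = List.replicate m ABC.c ++ u ++ [ABC.b] ++
      List.replicate n ABC.a ++ List.replicate n ABC.b}

namespace PA

variable {A : Type} {d : ℕ} (P : PA A d)

/-- End state of a run started in `s`. -/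
def endSt (s : Fin P.n) (ρ : List P.Tr) : Fin P.n := (ρ.getLast?).elim s (fun t => t.2.2)

/-- A run from state `s` processing word `w`. -/
def RunF (s : Fin P.n) (w : List A) (ρ : List P.Tr) : Prop :=
  (∀ t ∈ ρ, t ∈ P.trans) ∧ ρ.Chain' (fun t t' => t.2.2 = t'.1) ∧
  (∀ t, ρ.head? = some t → t.1 = s) ∧ P.word ρ = w

variable {P}

@[simp] lemma endSt_nil (s : Fin P.n) : P.endSt s [] = s := rfl

@[simp] lemma endSt_cons (s : Fin P.n) (t : P.Tr) (ρ : List P.Tr) :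
    P.endSt s (t :: ρ) = P.endSt t.2.2 ρ := by
  cases ρ with
  | nil => rfl
  | cons t' l =>
    cases h : (t' :: l).getLast? with
    | none => exact absurd h (by simp)
    | some x => simp [endSt, List.getLast?_cons_cons, h]

lemma endSt_append (s : Fin P.n) (ρ₁ ρ₂ : List P.Tr) :
    P.endSt s (ρ₁ ++ ρ₂) = P.endSt (P.endSt s ρ₁) ρ₂ := by
  induction ρ₁ generalizing s with
  | nil => simp
  | cons t l ih => simp [ih]

@[simp] lemma word_nil : P.word ([] : List P.Tr) = [] := rfl

@[simp] lemma word_cons (t : P.Tr) (ρ : List P.Tr) :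
    P.word (t :: ρ) = t.2.1.1 :: P.word ρ := rfl

@[simp] lemma word_append (ρ₁ ρ₂ : List P.Tr) :
    P.word (ρ₁ ++ ρ₂) = P.word ρ₁ ++ P.word ρ₂ := List.map_append

lemma word_length (ρ : List P.Tr) : (P.word ρ).length = ρ.length := List.length_map _

lemma word_take (ρ : List P.Tr) (k : ℕ) : P.word (ρ.take k) = (P.word ρ).take k := by
  simp [word]

lemma word_drop (ρ : List P.Tr) (k : ℕ) : P.word (ρ.drop k) = (P.word ρ).drop k := by
  simp [word]

@[simp] lemma image_nil : P.image ([] : List P.Tr) = 0 := rfl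

@[simp] lemma image_cons (t : P.Tr) (ρ : List P.Tr) :
    P.image (t :: ρ) = t.2.1.2 + P.image ρ := by simp [image]

@[simp] lemma image_append (ρ₁ ρ₂ : List P.Tr) :
    P.image (ρ₁ ++ ρ₂) = P.image ρ₁ + P.image ρ₂ := by simp [image]

lemma runF_nil {s : Fin P.n} {w : List A} : P.RunF s w [] ↔ w = [] := by
  simp [RunF, eq_comm, List.Chain', List.isChain_nil]

lemma runF_nil' (s : Fin P.n) : P.RunF s [] [] := runF_nil.mpr rfl

lemma runF_cons {s : Fin P.n} {w : List A} {t : P.Tr} {ρ : List P.Tr} :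
    P.RunF s w (t :: ρ) ↔
      t ∈ P.trans ∧ t.1 = s ∧ w = t.2.1.1 :: P.word ρ ∧ P.RunF t.2.2 (P.word ρ) ρ := by
  constructor
  · rintro ⟨hmem, hch, hhd, hw⟩
    rw [List.Chain', List.isChain_cons] at hch
    refine ⟨hmem t (by simp), hhd t rfl, hw.symm, fun t' ht' => hmem t' (by simp [ht']),
      hch.2, fun t' ht' => ?_, rfl⟩
    exact (hch.1 t' ht').symm
  · rintro ⟨hmem, hhd, hw, hmem', hch, hhd', -⟩
    refine ⟨?_, ?_, ?_, hw.symm⟩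
    · intro t' ht'
      rcases List.mem_cons.mp ht' with h | h
      · exact h ▸ hmem
      · exact hmem' t' h
    · rw [List.Chain', List.isChain_cons]
      exact ⟨fun y hy => (hhd' y hy).symm, hch⟩
    · intro t' ht'
      simp at ht'
      exact ht' ▸ hhd

lemma RunF.word_eq {s : Fin P.n} {w : List A} {ρ : List P.Tr} (h : P.RunF s w ρ) :
    P.word ρ = w := h.2.2.2

lemma RunF.length_eq {s : Fin P.n} {w : List A} {ρ : List P.Tr} (h : P.RunF s w ρ) :
    ρ.length = w.length := by rw [← h.word_eq, word_length]

lemma runF_unique (hdet : P.Deterministic) :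
    ∀ {ρ ρ' : List P.Tr} {s : Fin P.n} {w : List A},
      P.RunF s w ρ → P.RunF s w ρ' → ρ = ρ' := by
  intro ρ
  induction ρ with
  | nil =>
    intro ρ' s w h h'
    rw [runF_nil] at h
    subst h
    cases ρ' with
    | nil => rfl
    | cons t l => exact absurd h'.word_eq (by simp)
  | cons t l ih =>
    intro ρ' s w h h'
    cases ρ' with
    | nil =>
      rw [runF_nil] at h'
      subst h'
      exact absurd h.word_eq (by simp)
    | cons t' l' =>
      obtain ⟨q, ⟨x, v⟩, q2⟩ := t
      obtain ⟨q', ⟨x', v'⟩, q2'⟩ := t'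
      rw [runF_cons] at h h'
      obtain ⟨hm, hq, hw, hrest⟩ := h
      obtain ⟨hm', hq', hw', hrest'⟩ := h'
      simp only at hq hq' hw hw' hrest hrest'
      rw [hq, hq']
      rw [hw] at hw'
      obtain ⟨hx, hww⟩ := List.cons.inj hw'
      subst hx
      have hkey : ((q2, v) : Fin P.n × (Fin d → ℕ)) = (q2', v') := by
        apply hdet s x
        · exact hq ▸ hm
        · exact hq' ▸ hm'
      have hq2 : q2 = q2' := congrArg Prod.fst hkey
      have hv : v = v' := congrArg Prod.snd hkey
      subst hq2; subst hv
      rw [← hww] at hrest'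
      rw [ih hrest hrest']

lemma endSt_eq_getLast {s : Fin P.n} {ρ : List P.Tr} {x : P.Tr}
    (h : ρ.getLast? = some x) : P.endSt s ρ = x.2.2 := by simp [endSt, h]

lemma RunF.append {s : Fin P.n} {w₁ w₂ : List A} {ρ₁ ρ₂ : List P.Tr}
    (h₁ : P.RunF s w₁ ρ₁) (h₂ : P.RunF (P.endSt s ρ₁) w₂ ρ₂) :
    P.RunF s (w₁ ++ w₂) (ρ₁ ++ ρ₂) := by
  obtain ⟨m₁, c₁, hd₁, w₁eq⟩ := h₁
  obtain ⟨m₂, c₂, hd₂, w₂eq⟩ := h₂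
  refine ⟨?_, ?_, ?_, by simp [w₁eq, w₂eq]⟩
  · intro t ht; rcases List.mem_append.mp ht with h | h
    exacts [m₁ t h, m₂ t h]
  · rw [List.Chain', List.isChain_append]
    refine ⟨c₁, c₂, fun xx hx y hy => ?_⟩
    have hx' : ρ₁.getLast? = some xx := hx
    have : P.endSt s ρ₁ = xx.2.2 := endSt_eq_getLast hx'
    rw [← this]
    exact (hd₂ y hy).symm
  · intro t ht
    cases ρ₁ with
    | nil => exact hd₂ t ht
    | cons a l =>
      apply hd₁
      simpa using ht

lemma runF_split {s : Fin P.n} {w₁ w₂ : List A} {ρ : List P.Tr}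
    (h : P.RunF s (w₁ ++ w₂) ρ) :
    P.RunF s w₁ (ρ.take w₁.length) ∧
      P.RunF (P.endSt s (ρ.take w₁.length)) w₂ (ρ.drop w₁.length) := by
  obtain ⟨m, c, hd, weq⟩ := h
  have htw : P.word (ρ.take w₁.length) = w₁ := by
    rw [word_take, weq, List.take_left]
  have hdw : P.word (ρ.drop w₁.length) = w₂ := by
    rw [word_drop, weq, List.drop_left]
  have hsplit := List.take_append_drop w₁.length ρ
  rw [← hsplit, List.Chain', List.isChain_append] at c
  obtain ⟨c₁, c₂, cb⟩ := c
  refine ⟨⟨fun t ht => m t (List.take_subset _ _ ht), c₁, ?_, htw⟩,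
          fun t ht => m t (List.drop_subset _ _ ht), c₂, ?_, hdw⟩
  · intro t ht
    apply hd
    cases ρ with
    | nil => simp at ht
    | cons a l =>
      cases k : w₁.length with
      | zero => rw [k] at ht; simp at ht
      | succ k' => rw [k] at ht; simpa using ht
  · intro t ht
    cases hh : ρ.take w₁.length with
    | nil =>
      have hρdrop : List.drop w₁.length ρ = ρ := by
        rcases List.take_eq_nil_iff.mp hh with h0 | h0 <;> simp [h0]
      rw [hρdrop] at ht
      simpa using hd t ht
    | cons a l =>
      have hne : (a :: l) ≠ ([] : List P.Tr) := by simp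
      obtain ⟨x, hx⟩ := Option.isSome_iff_exists.mp (List.getLast?_isSome.mpr hne)
      rw [endSt_eq_getLast hx]
      exact (cb x (by rw [hh]; exact hx) t ht).symm

lemma runF_take {s : Fin P.n} {w₁ w₂ : List A} {ρ : List P.Tr}
    (h : P.RunF s (w₁ ++ w₂) ρ) : P.RunF s w₁ (ρ.take w₁.length) := (runF_split h).1

lemma endSt_take_drop (s : Fin P.n) (ρ : List P.Tr) (k : ℕ) :
    P.endSt (P.endSt s (ρ.take k)) (ρ.drop k) = P.endSt s ρ := by
  rw [← endSt_append, List.take_append_drop]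

lemma runF_replicate_pow {s : Fin P.n} {x : A} {q : ℕ} {ρ : List P.Tr}
    (h : P.RunF s (List.replicate q x) ρ) (hloop : P.endSt s ρ = s) (k : ℕ) :
    ∃ ρ', P.RunF s (List.replicate (k * q) x) ρ' ∧ P.endSt s ρ' = s := by
  induction k with
  | zero => exact ⟨[], by simpa using runF_nil' s, rfl⟩
  | succ k ih =>
    obtain ⟨ρ', hρ', hend⟩ := ih
    refine ⟨ρ ++ ρ', ?_, ?_⟩
    · have he : (k + 1) * q = q + k * q := by ring
      rw [he, List.replicate_add]
      exact h.append (by rw [hloop]; exact hρ')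
    · rw [endSt_append, hloop, hend]

lemma runF_replicate_split {s : Fin P.n} {x : A} {L : ℕ} {ρ : List P.Tr}
    (h : P.RunF s (List.replicate L x) ρ) {j : ℕ} (hj : j ≤ L) :
    P.RunF s (List.replicate j x) (ρ.take j) ∧
      P.RunF (P.endSt s (ρ.take j)) (List.replicate (L - j) x) (ρ.drop j) := by
  have heq : List.replicate L x = List.replicate j x ++ List.replicate (L - j) x := by
    rw [← List.replicate_add]; congr 1; omega
  rw [heq] at h
  have := runF_split h
  simpa using this

/-- Common setup: a repeated state pair along a single-letter run, with the shift
property. -/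
lemma replicate_run_shift (hdet : P.Deterministic) {s : Fin P.n} {x : A} {L : ℕ}
    {ρ : List P.Tr} (h : P.RunF s (List.replicate L x) ρ) (hL : P.n ≤ L) :
    ∃ u v : ℕ, u < v ∧ v ≤ P.n ∧
      (∀ t, v + t ≤ L →
        P.endSt s (ρ.take (u + t)) = P.endSt s (ρ.take (v + t))) := by
  have hcard : Fintype.card (Fin P.n) < Fintype.card (Fin (P.n + 1)) := by simp
  obtain ⟨u₀, v₀, hne, hequv⟩ :=
    Fintype.exists_ne_map_eq_of_card_lt
      (fun j : Fin (P.n + 1) => P.endSt s (ρ.take j.val)) hcard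
  obtain ⟨u, v, huv, hvN, hzeq⟩ : ∃ u v : ℕ, u < v ∧ v ≤ P.n ∧
      P.endSt s (ρ.take u) = P.endSt s (ρ.take v) := by
    rcases lt_or_gt_of_ne hne with hlt | hlt
    · exact ⟨u₀, v₀, hlt, Nat.lt_succ_iff.mp v₀.isLt, hequv⟩
    · exact ⟨v₀, u₀, hlt, Nat.lt_succ_iff.mp u₀.isLt, hequv.symm⟩
  refine ⟨u, v, huv, hvN, fun t ht => ?_⟩
  have r₁ := (runF_replicate_split h (j := u) (by omega)).2
  have r₂ := (runF_replicate_split h (j := v) (by omega)).2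
  rw [← hzeq] at r₂
  have hsplit₁ : List.replicate (L - u) x
      = List.replicate (L - v) x ++ List.replicate (v - u) x := by
    rw [← List.replicate_add]; congr 1; omega
  rw [hsplit₁] at r₁
  have r₁' := runF_take r₁
  have hlen' : (List.replicate (L - v) x).length = L - v := by simp
  rw [hlen'] at r₁'
  have heqruns : (ρ.drop u).take (L - v) = ρ.drop v := runF_unique hdet r₁' r₂
  have e₁ : ρ.take (u + t) = ρ.take u ++ (ρ.drop u).take t := List.take_add
  have e₂ : ρ.take (v + t) = ρ.take v ++ (ρ.drop v).take t := List.take_add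
  have e₃ : (ρ.drop v).take t = (ρ.drop u).take t := by
    rw [← heqruns, List.take_take]
    congr 1
    omega
  rw [e₁, e₂, e₃, endSt_append, endSt_append, hzeq]

/-- The last `n!`-worth of a long single-letter run forms a loop at the end state. -/
lemma tail_loop (hdet : P.Deterministic) {s : Fin P.n} {x : A} {L : ℕ} {ρ : List P.Tr}
    (h : P.RunF s (List.replicate L x) ρ) (hL : P.n ≤ L) :
    ∃ χ, P.RunF (P.endSt s ρ) (List.replicate (Nat.factorial P.n) x) χ ∧
      P.endSt (P.endSt s ρ) χ = P.endSt s ρ := by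
  obtain ⟨u, v, huv, hvN, hshift⟩ := replicate_run_shift hdet h hL
  set q := v - u with hqdef
  have hq0 : 0 < q := by omega
  have hqN : q ≤ P.n := by omega
  have hfix : P.endSt s (ρ.take (L - q)) = P.endSt s ρ := by
    have := hshift (L - v) (by omega)
    have e₁ : u + (L - v) = L - q := by omega
    have e₂ : v + (L - v) = L := by omega
    rw [e₁, e₂] at this
    have hlen : ρ.length = L := by simpa using h.length_eq
    rw [this, List.take_of_length_le (by omega)]
  have hkey := (runF_replicate_split h (j := L - q) (by omega)).2
  have hLq : L - (L - q) = q := by omega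
  rw [hLq, hfix] at hkey
  have hloop : P.endSt (P.endSt s ρ) (ρ.drop (L - q)) = P.endSt s ρ := by
    conv_rhs => rw [← endSt_take_drop s ρ (L - q)]
    rw [hfix]
  obtain ⟨χ, hχ, hχend⟩ := runF_replicate_pow hkey hloop (Nat.factorial P.n / q)
  rw [Nat.div_mul_cancel (Nat.dvd_factorial hq0 hqN)] at hχ
  exact ⟨χ, hχ, hχend⟩

/-- Periodicity of states along a long single-letter run. -/
lemma take_endSt_period (hdet : P.Deterministic) {s : Fin P.n} {x : A} {L : ℕ}
    {ρ : List P.Tr} (h : P.RunF s (List.replicate L x) ρ)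
    {m₁ m₂ : ℕ} (h₁ : P.n ≤ m₁) (hle : m₁ ≤ m₂) (hL : m₂ ≤ L)
    (hdvd : Nat.factorial P.n ∣ m₂ - m₁) :
    P.endSt s (ρ.take m₁) = P.endSt s (ρ.take m₂) := by
  obtain ⟨u, v, huv, hvN, hshift⟩ := replicate_run_shift hdet h (by omega)
  set q := v - u with hqdef
  have hq0 : 0 < q := by omega
  have hqN : q ≤ P.n := by omega
  have hstep : ∀ j, u ≤ j → j + q ≤ L →
      P.endSt s (ρ.take j) = P.endSt s (ρ.take (j + q)) := by
    intro j hju hjL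
    have := hshift (j - u) (by omega)
    have e1 : u + (j - u) = j := by omega
    have e2 : v + (j - u) = j + q := by omega
    rw [e1, e2] at this
    exact this
  obtain ⟨K, hK⟩ : q ∣ m₂ - m₁ := dvd_trans (Nat.dvd_factorial hq0 hqN) hdvd
  have hKq : K * q = m₂ - m₁ := by rw [Nat.mul_comm]; omega
  have main : ∀ K m, u ≤ m → m + K * q ≤ L →
      P.endSt s (ρ.take m) = P.endSt s (ρ.take (m + K * q)) := by
    intro K
    induction K with
    | zero => intro m _ _; simp
    | succ K ihK =>
      intro m hm hmL
      have hmul : (K + 1) * q = K * q + q := by ring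
      rw [hmul] at hmL
      have h1 := ihK m hm (by omega)
      have h2 := hstep (m + K * q) (by omega) (by omega)
      rw [hmul, ← Nat.add_assoc, h1, h2]
  have := main K m₁ (by omega) (by omega)
  have e : m₁ + K * q = m₂ := by omega
  rw [e] at this
  exact this

lemma endSt_replicate_congr_le (hdet : P.Deterministic) {s : Fin P.n} {x : A}
    {m₁ m₂ : ℕ} {ρ₁ ρ₂ : List P.Tr}
    (hr₁ : P.RunF s (List.replicate m₁ x) ρ₁) (hr₂ : P.RunF s (List.replicate m₂ x) ρ₂)
    (hn₁ : P.n ≤ m₁) (hle : m₁ ≤ m₂)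
    (hdvd : Nat.factorial P.n ∣ m₂ - m₁) :
    P.endSt s ρ₁ = P.endSt s ρ₂ := by
  have hsplit := (runF_replicate_split hr₂ (j := m₁) hle).1
  have he : ρ₁ = ρ₂.take m₁ := runF_unique hdet hr₁ hsplit
  have hlen₂ : ρ₂.length = m₂ := by simpa using hr₂.length_eq
  have h2 : P.endSt s ρ₂ = P.endSt s (ρ₂.take m₂) := by
    rw [List.take_of_length_le (by omega)]
  rw [he, h2]
  exact take_endSt_period hdet hr₂ hn₁ hle le_rfl hdvd

lemma endSt_replicate_congr (hdet : P.Deterministic) {s : Fin P.n} {x : A}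
    {m₁ m₂ : ℕ} {ρ₁ ρ₂ : List P.Tr}
    (hr₁ : P.RunF s (List.replicate m₁ x) ρ₁) (hr₂ : P.RunF s (List.replicate m₂ x) ρ₂)
    (hn₁ : P.n ≤ m₁) (hn₂ : P.n ≤ m₂)
    (hmod : m₁ % Nat.factorial P.n = m₂ % Nat.factorial P.n) :
    P.endSt s ρ₁ = P.endSt s ρ₂ := by
  rcases le_total m₁ m₂ with hle | hle
  · exact endSt_replicate_congr_le hdet hr₁ hr₂ hn₁ hle
      ((Nat.modEq_iff_dvd' hle).mp hmod)
  · exact (endSt_replicate_congr_le hdet hr₂ hr₁ hn₂ hle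
      ((Nat.modEq_iff_dvd' hle).mp hmod.symm)).symm

end PA

/-- `k`-fold repetition of a word. -/
def reps {α : Type*} (w : List α) : ℕ → List α
  | 0 => []
  | k + 1 => w ++ reps w k

@[simp] lemma reps_zero {α : Type*} (w : List α) : reps w 0 = [] := rfl

@[simp] lemma reps_succ {α : Type*} (w : List α) (k : ℕ) :
    reps w (k + 1) = w ++ reps w k := rfl

lemma reps_add {α : Type*} (w : List α) (a b : ℕ) :
    reps w (a + b) = reps w a ++ reps w b := by
  induction a with
  | zero => simp
  | succ a ih =>
    have : a + 1 + b = (a + b) + 1 := by omega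
    rw [this, reps_succ, reps_succ, ih, List.append_assoc]

lemma reps_succ_right {α : Type*} (w : List α) (k : ℕ) :
    reps w (k + 1) = reps w k ++ w := by
  rw [reps_add w k 1]
  simp

@[simp] lemma reps_length {α : Type*} (w : List α) (k : ℕ) :
    (reps w k).length = k * w.length := by
  induction k with
  | zero => simp
  | succ k ih => simp [ih]; ring

lemma reps_mem {α : Type*} {w : List α} {k : ℕ} {x : α} (h : x ∈ reps w k) : x ∈ w := by
  induction k with
  | zero => simp at h
  | succ k ih =>
    rcases List.mem_append.mp h with h | h
    exacts [h, ih h]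

namespace PA

variable {A : Type} {d : ℕ} {P : PA A d}

/-- Concatenation of runs `π a, π (a+1), ..., π (a+b-1)`. -/
def catRuns (π : ℕ → List P.Tr) : ℕ → ℕ → List P.Tr
  | _, 0 => []
  | a, b + 1 => π a ++ catRuns π (a + 1) b

@[simp] lemma catRuns_zero (π : ℕ → List P.Tr) (a : ℕ) : catRuns π a 0 = [] := rfl

@[simp] lemma catRuns_succ (π : ℕ → List P.Tr) (a b : ℕ) :
    catRuns π a (b + 1) = π a ++ catRuns π (a + 1) b := rfl

lemma catRuns_add (π : ℕ → List P.Tr) (a b c : ℕ) :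
    catRuns π a (b + c) = catRuns π a b ++ catRuns π (a + b) c := by
  induction b generalizing a with
  | zero => simp
  | succ b ih =>
    have e : b + 1 + c = (b + c) + 1 := by omega
    rw [e, catRuns_succ, catRuns_succ, ih (a + 1), List.append_assoc]
    have e2 : a + 1 + b = a + (b + 1) := by omega
    rw [e2]

lemma catRuns_succ_right (π : ℕ → List P.Tr) (a b : ℕ) :
    catRuns π a (b + 1) = catRuns π a b ++ π (a + b) := by
  rw [catRuns_add π a b 1]
  simp

lemma catRuns_run {st : ℕ → Fin P.n} {π : ℕ → List P.Tr} {w : List A} {k : ℕ}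
    (hπ : ∀ j < k, P.RunF (st j) w (π j) ∧ P.endSt (st j) (π j) = st (j + 1)) :
    ∀ b a, a + b ≤ k →
      P.RunF (st a) (reps w b) (catRuns π a b) ∧
        P.endSt (st a) (catRuns π a b) = st (a + b) := by
  intro b
  induction b with
  | zero => intro a ha; simpa using runF_nil' (st a)
  | succ b ih =>
    intro a ha
    obtain ⟨h1, h2⟩ := hπ a (by omega)
    obtain ⟨h3, h4⟩ := ih (a + 1) (by omega)
    constructor
    · rw [reps_succ, catRuns_succ]
      exact h1.append (by rw [h2]; exact h3)
    · rw [catRuns_succ, endSt_append, h2, h4]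
      congr 1
      omega

/-- Decompose a run on `w^k` into `k` segment runs. -/
lemma runF_reps_decomp {s : Fin P.n} {w : List A} {k : ℕ} {ρ : List P.Tr}
    (h : P.RunF s (reps w k) ρ) :
    ∃ (st : ℕ → Fin P.n) (π : ℕ → List P.Tr), st 0 = s ∧
      ∀ j < k, P.RunF (st j) w (π j) ∧ P.endSt (st j) (π j) = st (j + 1) := by
  induction k generalizing s ρ with
  | zero => exact ⟨fun _ => s, fun _ => [], rfl, fun j hj => absurd hj (by omega)⟩
  | succ k ih =>
    rw [reps_succ] at h
    obtain ⟨h1, h2⟩ := runF_split h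
    obtain ⟨st', π', hst0, hπ'⟩ := ih h2
    refine ⟨fun j => Nat.rec s (fun j' _ => st' j') j,
            fun j => Nat.rec (ρ.take w.length) (fun j' _ => π' j') j, rfl, ?_⟩
    intro j hj
    cases j with
    | zero =>
      refine ⟨h1, ?_⟩
      show P.endSt s (ρ.take w.length) = st' 0
      rw [hst0]
    | succ j => exact hπ' j (by omega)

lemma RunF.isRun {w : List A} {ρ : List P.Tr} (h : P.RunF P.init w ρ) :
    P.IsRun ρ := ⟨h.1, h.2.1, h.2.2.1⟩

lemma isRun_runF {w : List A} {ρ : List P.Tr} (h : P.IsRun ρ) (hw : P.word ρ = w) :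
    P.RunF P.init w ρ := ⟨h.1, h.2.1, h.2.2, hw⟩

lemma lastState_eq_endSt (ρ : List P.Tr) : P.lastState ρ = P.endSt P.init ρ := rfl

end PA

namespace E'neg

/-- Leading-`c` count. -/
def lcc : List ABC → ℕ
  | [] => 0
  | x :: t => if x = ABC.c then lcc t + 1 else 0

lemma lcc_replicate_append (k : ℕ) (w : List ABC) :
    lcc (List.replicate k ABC.c ++ w) = k + lcc w := by
  induction k with
  | zero => simp
  | succ k ih =>
    rw [List.replicate_succ, List.cons_append]
    simp only [lcc, ih]
    simp
    omega

lemma lcc_cons_ne {x : ABC} {t : List ABC} (h : x ≠ ABC.c) : lcc (x :: t) = 0 := by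
  simp [lcc, h]

lemma mem_E' (m n : ℕ) (u : List ABC) (hm : 0 < m) (hn : 0 < n)
    (hlen : u.length = m - 1) (hc : ∀ x ∈ u, x ≠ ABC.c) :
    List.replicate m ABC.c ++ (u ++ ([ABC.b] ++
      (List.replicate n ABC.a ++ List.replicate n ABC.b))) ∈ E'Lang :=
  ⟨m, n, u, hm, hn, hlen, hc, by simp [List.append_assoc]⟩

/-- The crucial non-membership: the word `c^m (b a^J)^y b a^{J+p} b^J` with
`m = y(J+1) + p + 1` is not in `E'`. -/
lemma B_not_mem {J p y m : ℕ} (hp : 0 < p) (hy : 0 < y)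
    (hm : m = y * (J + 1) + p + 1) :
    List.replicate m ABC.c ++ (reps (ABC.b :: List.replicate J ABC.a) y ++
      ((ABC.b :: List.replicate J ABC.a) ++
        (List.replicate p ABC.a ++ List.replicate J ABC.b))) ∉ E'Lang := by
  rintro ⟨m', n', u, hm', hn', hlen, hcfree, heq⟩
  set seg := ABC.b :: List.replicate J ABC.a with hseg
  -- the body, in a convenient form
  have hbody : seg ++ (List.replicate p ABC.a ++ List.replicate J ABC.b)
      = (ABC.b :: List.replicate (J + p) ABC.a) ++ List.replicate J ABC.b := by
    rw [hseg, List.cons_append, List.cons_append]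
    congr 1
    rw [← List.append_assoc, ← List.replicate_add]
  rw [hbody] at heq
  -- first: m' = m  (leading c's)
  obtain ⟨y', rfl⟩ : ∃ y', y = y' + 1 := ⟨y - 1, by omega⟩
  have hlcc1 : lcc (List.replicate m ABC.c ++ (reps seg (y' + 1) ++
      ((ABC.b :: List.replicate (J + p) ABC.a) ++ List.replicate J ABC.b))) = m := by
    rw [lcc_replicate_append, reps_succ, hseg]
    simp [List.cons_append, lcc]
  have hlcc2 : lcc (List.replicate m' ABC.c ++ u ++ [ABC.b] ++
      List.replicate n' ABC.a ++ List.replicate n' ABC.b) = m' := by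
    simp only [List.append_assoc]
    rw [lcc_replicate_append]
    cases u with
    | nil => simp [lcc]
    | cons xu tu =>
      rw [List.cons_append]
      rw [lcc_cons_ne (hcfree xu (by simp))]
      omega
  have hmm' : m' = m := by rw [← hlcc1, heq, hlcc2]
  subst hmm'
  -- now compare the element at index m' + (m' - 1)
  have hL : (List.replicate m' ABC.c ++ (reps seg (y' + 1) ++
      ((ABC.b :: List.replicate (J + p) ABC.a) ++ List.replicate J ABC.b)))[
        m' + ((y' + 1) * (J + 1) + p)]? = some ABC.a := by
    rw [List.getElem?_append_right (by simp)]
    simp only [List.length_replicate]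
    have e1 : m' + ((y' + 1) * (J + 1) + p) - m' = (y' + 1) * (J + 1) + p := by omega
    rw [e1]
    have hrl : (reps seg (y' + 1)).length = (y' + 1) * (J + 1) := by simp [hseg]; ring
    rw [List.getElem?_append_right (by rw [hrl]; omega)]
    have e2 : (y' + 1) * (J + 1) + p - (reps seg (y' + 1)).length = p := by
      rw [hrl]; omega
    rw [e2]
    obtain ⟨q, rfl⟩ : ∃ q, p = q + 1 := ⟨p - 1, by omega⟩
    rw [List.getElem?_append_left (by simp)]
    rw [List.getElem?_cons_succ, List.getElem?_replicate]
    rw [if_pos (by omega)]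
  have hR : (List.replicate m' ABC.c ++ u ++ [ABC.b] ++
      List.replicate n' ABC.a ++ List.replicate n' ABC.b)[
        m' + ((y' + 1) * (J + 1) + p)]? = some ABC.b := by
    simp only [List.append_assoc]
    rw [List.getElem?_append_right (by simp)]
    simp only [List.length_replicate]
    have e1 : m' + ((y' + 1) * (J + 1) + p) - m' = u.length := by
      rw [hlen, hm]; omega
    rw [e1]
    rw [List.getElem?_append_right le_rfl]
    simp
  rw [heq] at hL
  rw [hL] at hR
  simp at hR

end E'neg

open PA in
theorem E'_not_dpa : ¬ ∃ (d : ℕ) (P : PA ABC d), P.Deterministic ∧ P.Lang = E'Lang := by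
  classical
  rintro ⟨d, P, hdet, hLang⟩
  have hN : 0 < P.n := P.init.pos
  have hp : 0 < Nat.factorial P.n := Nat.factorial_pos _
  set p := Nat.factorial P.n with hp_def
  obtain ⟨pp, hpp⟩ : ∃ pp, p = pp + 1 := ⟨p - 1, by omega⟩
  set J := (P.n + 1) * pp + P.n with hJ_def
  have hJ1 : J + 1 = (P.n + 1) * p := by rw [hJ_def, hpp]; ring
  have hJN : P.n ≤ J := by omega
  have hJpos : 0 < J := by omega
  set seg : List ABC := ABC.b :: List.replicate J ABC.a with hseg
  have hseg_len : seg.length = J + 1 := by rw [hseg]; simp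
  have hseg_cfree : ∀ z ∈ seg, z ≠ ABC.c := by
    intro z hz
    rw [hseg] at hz
    rcases List.mem_cons.mp hz with rfl | hz
    · simp
    · rw [List.eq_of_mem_replicate hz]; simp
  have hreps_cfree : ∀ k : ℕ, ∀ z ∈ reps seg k, z ≠ ABC.c :=
    fun k z hz => hseg_cfree z (reps_mem hz)
  have hreps_len : ∀ k : ℕ, (reps seg k).length = k * (J + 1) := by
    intro k; rw [reps_length, hseg_len]
  have hsegsh : ∀ k : ℕ, reps seg (k + 1) ++ List.replicate J ABC.b
      = reps seg k ++ ([ABC.b] ++ (List.replicate J ABC.a ++ List.replicate J ABC.b)) := by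
    intro k
    rw [reps_succ_right, List.append_assoc, hseg]
    rfl
  -- ======== the word W and its run ========
  set M := P.n * (J + 1) + 1 with hM_def
  have hNM : P.n ≤ M := by
    have := Nat.mul_le_mul_left P.n (show 1 ≤ J + 1 by omega)
    omega
  have hWmem : List.replicate M ABC.c ++ (reps seg (P.n + 1) ++ List.replicate J ABC.b)
      ∈ E'Lang := by
    rw [hsegsh P.n]
    exact E'neg.mem_E' M J (reps seg P.n) (by omega) (by omega)
      (by rw [hreps_len]; omega) (hreps_cfree _)
  have hWlang : List.replicate M ABC.c ++ (reps seg (P.n + 1) ++ List.replicate J ABC.b)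
      ∈ P.Lang := by rw [hLang]; exact hWmem
  obtain ⟨ρW, hWacc, hWword⟩ := hWlang
  have hWrun := isRun_runF hWacc.1 hWword
  have hsplW := runF_split (w₁ := List.replicate M ABC.c) hWrun
  rw [List.length_replicate] at hsplW
  have hcWrun : P.RunF P.init (List.replicate M ABC.c) (ρW.take M) := hsplW.1
  set z := P.endSt P.init (ρW.take M) with hz_def
  have hbodyW := hsplW.2
  have hsegsWrun := runF_take (w₁ := reps seg (P.n + 1)) hbodyW
  obtain ⟨st, π, hst0, hπ⟩ := runF_reps_decomp hsegsWrun
  -- ======== pigeonhole ========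
  obtain ⟨x₀, y₀, hne, hxyeq⟩ :=
    Fintype.exists_ne_map_eq_of_card_lt (fun j : Fin (P.n + 1) => st j.val) (by simp)
  obtain ⟨x, y, hxy, hyN, hstxy⟩ : ∃ x y : ℕ, x < y ∧ y ≤ P.n ∧ st x = st y := by
    rcases lt_or_gt_of_ne hne with hlt | hlt
    · exact ⟨x₀, y₀, hlt, Nat.lt_succ_iff.mp y₀.isLt, hxyeq⟩
    · exact ⟨y₀, x₀, hlt, Nat.lt_succ_iff.mp x₀.isLt, hxyeq.symm⟩
  obtain ⟨e, hye⟩ : ∃ e, y = x + e + 1 := ⟨y - x - 1, by omega⟩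
  have hππ : π x = π y := by
    have h2 := (hπ y (by omega)).1
    rw [← hstxy] at h2
    exact runF_unique hdet (hπ x (by omega)).1 h2
  have hst1 : st (x + 1) = st (y + 1) := by
    rw [← (hπ x (by omega)).2, hππ, hstxy, (hπ y (by omega)).2]
  -- ======== the loop χ ========
  have hπxb := (hπ x (by omega)).1
  have hsegsplit : seg = [ABC.b] ++ List.replicate J ABC.a := by rw [hseg]; rfl
  rw [hsegsplit] at hπxb
  have hsplx := runF_split (w₁ := [ABC.b]) hπxb
  simp only [List.length_singleton] at hsplx
  have hα := hsplx.2
  have hαend : P.endSt (P.endSt (st x) ((π x).take 1)) ((π x).drop 1) = st (x + 1) := by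
    rw [endSt_take_drop]
    exact (hπ x (by omega)).2
  obtain ⟨χ, hχ, hχend⟩ := tail_loop hdet hα hJN
  rw [hαend] at hχ hχend
  -- ======== arithmetic for m ========
  set m := y * (J + 1) + p + 1 with hm_def
  have hyJ : y * (J + 1) = x * (J + 1) + e * (J + 1) + (J + 1) := by rw [hye]; ring
  have hJ1le : J + 1 ≤ y * (J + 1) := Nat.le_mul_of_pos_left _ (by omega)
  have hNm : P.n ≤ m := by omega
  have hmodm : m % p = 1 % p := by
    have he : m = 1 + (y * (P.n + 1) + 1) * p := by rw [hm_def, hJ1]; ring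
    rw [he, Nat.add_mul_mod_self_right]
  have hmodM : M % p = 1 % p := by
    have he : M = 1 + (P.n * (P.n + 1)) * p := by rw [hM_def, hJ1]; ring
    rw [he, Nat.add_mul_mod_self_right]
  -- ======== the word A and its run ========
  set uA := reps seg x ++ ([ABC.b] ++ (List.replicate (J + p) ABC.a ++ reps seg e))
    with huA_def
  have huAlen : uA.length = m - 1 := by
    rw [huA_def]
    simp only [List.length_append, List.length_singleton, List.length_replicate, hreps_len]
    omega
  have huAfree : ∀ zz ∈ uA, zz ≠ ABC.c := by
    intro zz hzz
    rw [huA_def] at hzz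
    simp only [List.mem_append, List.mem_singleton, List.mem_replicate] at hzz
    rcases hzz with h | h | h
    · exact hreps_cfree _ _ h
    · rw [h]; simp
    · rcases h with h | h
      · rw [h.2]; simp
      · exact hreps_cfree _ _ h
  have hAsh : uA ++ ([ABC.b] ++ (List.replicate J ABC.a ++ List.replicate J ABC.b))
      = reps seg x ++ (seg ++ (List.replicate p ABC.a ++
          (reps seg (e + 1) ++ List.replicate J ABC.b))) := by
    rw [huA_def, reps_succ_right, hseg,
      show List.replicate (J + p) ABC.a
        = List.replicate J ABC.a ++ List.replicate p ABC.a from List.replicate_add J p ABC.a]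
    simp [List.append_assoc, List.cons_append]
    rw [List.replicate_add, List.append_assoc]
  have hAmem : List.replicate m ABC.c ++ (reps seg x ++ (seg ++ (List.replicate p ABC.a ++
      (reps seg (e + 1) ++ List.replicate J ABC.b)))) ∈ E'Lang := by
    rw [← hAsh]
    exact E'neg.mem_E' m J uA (by omega) (by omega) huAlen huAfree
  have hAlang : List.replicate m ABC.c ++ (reps seg x ++ (seg ++ (List.replicate p ABC.a ++
      (reps seg (e + 1) ++ List.replicate J ABC.b)))) ∈ P.Lang := by
    rw [hLang]; exact hAmem
  obtain ⟨ρA, hAacc, hAword⟩ := hAlang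
  have hArun := isRun_runF hAacc.1 hAword
  have hsplA := runF_split (w₁ := List.replicate m ABC.c) hArun
  rw [List.length_replicate] at hsplA
  have hzA : P.endSt P.init (ρA.take m) = z := by
    rw [hz_def]
    exact endSt_replicate_congr hdet hsplA.1 hcWrun hNm hNM (by rw [hmodm, hmodM])
  -- ======== the word W' providing β ========
  set M' := y * (J + 1) + 1 with hM'_def
  have hNM' : P.n ≤ M' := by omega
  have hmodM' : M' % p = 1 % p := by
    have he : M' = 1 + (y * (P.n + 1)) * p := by rw [hM'_def, hJ1]; ring
    rw [he, Nat.add_mul_mod_self_right]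
  have hW'mem : List.replicate M' ABC.c ++ (reps seg (y + 1) ++ List.replicate J ABC.b)
      ∈ E'Lang := by
    rw [hsegsh y]
    exact E'neg.mem_E' M' J (reps seg y) (by omega) (by omega)
      (by rw [hreps_len]; omega) (hreps_cfree _)
  have hW'lang : List.replicate M' ABC.c ++ (reps seg (y + 1) ++ List.replicate J ABC.b)
      ∈ P.Lang := by rw [hLang]; exact hW'mem
  obtain ⟨ρ', hW'acc, hW'word⟩ := hW'lang
  have hW'run := isRun_runF hW'acc.1 hW'word
  have hspl' := runF_split (w₁ := List.replicate M' ABC.c) hW'run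
  rw [List.length_replicate] at hspl'
  have hz'A : P.endSt P.init (ρ'.take M') = z := by
    rw [hz_def]
    exact endSt_replicate_congr hdet hspl'.1 hcWrun hNM' hNM (by rw [hmodM', hmodM])
  have hbody' := hspl'.2
  rw [hz'A, ← hst0] at hbody'
  have hκ := runF_split (w₁ := reps seg (y + 1)) hbody'
  have hcat := catRuns_run hπ (y + 1) 0 (by omega)
  have hcat1 : P.RunF (st 0) (reps seg (y + 1)) (catRuns π 0 (y + 1)) := hcat.1
  have hκeq : (ρ'.drop M').take (reps seg (y + 1)).length = catRuns π 0 (y + 1) :=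
    runF_unique hdet hκ.1 hcat1
  have hβ : P.RunF (st (y + 1)) (List.replicate J ABC.b)
      ((ρ'.drop M').drop (reps seg (y + 1)).length) := by
    have h2 := hκ.2
    rw [hκeq] at h2
    have h3 := hcat.2
    rw [show (0 : ℕ) + (y + 1) = y + 1 from by omega] at h3
    rw [h3] at h2
    exact h2
  set β := (ρ'.drop M').drop (reps seg (y + 1)).length with hβ_def
  -- ======== synthetic run for A ========
  have hCx := catRuns_run hπ x 0 (by omega)
  have hCe := catRuns_run hπ (e + 1) (x + 1) (by omega)
  have hCxe : P.endSt (st 0) (catRuns π 0 x) = st x := by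
    have := hCx.2
    rw [show (0 : ℕ) + x = x from by omega] at this
    exact this
  have hCee : P.endSt (st (x + 1)) (catRuns π (x + 1) (e + 1)) = st (y + 1) := by
    have := hCe.2
    rw [show x + 1 + (e + 1) = y + 1 from by omega] at this
    exact this
  have rA5 : P.RunF (st (x + 1))
      (List.replicate p ABC.a ++ (reps seg (e + 1) ++ List.replicate J ABC.b))
      (χ ++ (catRuns π (x + 1) (e + 1) ++ β)) := by
    refine hχ.append ?_
    rw [hχend]
    refine hCe.1.append ?_
    rw [hCee]
    exact hβ
  have rA4 : P.RunF (st x)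
      (seg ++ (List.replicate p ABC.a ++ (reps seg (e + 1) ++ List.replicate J ABC.b)))
      (π x ++ (χ ++ (catRuns π (x + 1) (e + 1) ++ β))) := by
    refine (hπ x (by omega)).1.append ?_
    rw [(hπ x (by omega)).2]
    exact rA5
  have rA3 : P.RunF (st 0)
      (reps seg x ++ (seg ++ (List.replicate p ABC.a ++
        (reps seg (e + 1) ++ List.replicate J ABC.b))))
      (catRuns π 0 x ++ (π x ++ (χ ++ (catRuns π (x + 1) (e + 1) ++ β)))) := by
    refine hCx.1.append ?_
    rw [hCxe]
    exact rA4
  have rA2 : P.RunF P.init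
      (List.replicate m ABC.c ++ (reps seg x ++ (seg ++ (List.replicate p ABC.a ++
        (reps seg (e + 1) ++ List.replicate J ABC.b)))))
      (ρA.take m ++ (catRuns π 0 x ++ (π x ++ (χ ++ (catRuns π (x + 1) (e + 1) ++ β))))) := by
    refine hsplA.1.append ?_
    rw [hzA, ← hst0]
    exact rA3
  have huniq : ρA = ρA.take m ++ (catRuns π 0 x ++ (π x ++ (χ ++
      (catRuns π (x + 1) (e + 1) ++ β)))) := runF_unique hdet hArun rA2
  have hfinA : P.endSt P.init (ρA.take m ++ (catRuns π 0 x ++ (π x ++ (χ ++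
      (catRuns π (x + 1) (e + 1) ++ β))))) ∈ P.final := by
    rw [← huniq]
    exact hAacc.2.1
  have himgA : P.image (ρA.take m ++ (catRuns π 0 x ++ (π x ++ (χ ++
      (catRuns π (x + 1) (e + 1) ++ β))))) ∈ P.C := by
    rw [← huniq]
    exact hAacc.2.2
  -- ======== synthetic run for B ========
  have hχ' : P.RunF (st (y + 1)) (List.replicate p ABC.a) χ := by
    rw [← hst1]; exact hχ
  have hχend' : P.endSt (st (y + 1)) χ = st (y + 1) := by
    rw [← hst1]; exact hχend
  have rB4 : P.RunF (st (y + 1))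
      (List.replicate p ABC.a ++ List.replicate J ABC.b) (χ ++ β) := by
    refine hχ'.append ?_
    rw [hχend']
    exact hβ
  have rB3 : P.RunF (st y)
      (seg ++ (List.replicate p ABC.a ++ List.replicate J ABC.b)) (π y ++ (χ ++ β)) := by
    refine (hπ y (by omega)).1.append ?_
    rw [(hπ y (by omega)).2]
    exact rB4
  have hCy := catRuns_run hπ y 0 (by omega)
  have hCye : P.endSt (st 0) (catRuns π 0 y) = st y := by
    have := hCy.2
    rw [show (0 : ℕ) + y = y from by omega] at this
    exact this
  have rB2 : P.RunF (st 0)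
      (reps seg y ++ (seg ++ (List.replicate p ABC.a ++ List.replicate J ABC.b)))
      (catRuns π 0 y ++ (π y ++ (χ ++ β))) := by
    refine hCy.1.append ?_
    rw [hCye]
    exact rB3
  have rB1 : P.RunF P.init
      (List.replicate m ABC.c ++ (reps seg y ++ (seg ++ (List.replicate p ABC.a ++
        List.replicate J ABC.b))))
      (ρA.take m ++ (catRuns π 0 y ++ (π y ++ (χ ++ β)))) := by
    refine hsplA.1.append ?_
    rw [hzA, ← hst0]
    exact rB2
  -- ======== B is accepted ========
  have hendA : P.endSt P.init (ρA.take m ++ (catRuns π 0 x ++ (π x ++ (χ ++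
      (catRuns π (x + 1) (e + 1) ++ β))))) = P.endSt (st (y + 1)) β := by
    simp only [endSt_append]
    rw [hzA, ← hst0, hCxe, (hπ x (by omega)).2, hχend, hCee]
  have hendB : P.endSt P.init (ρA.take m ++ (catRuns π 0 y ++ (π y ++ (χ ++ β))))
      = P.endSt (st (y + 1)) β := by
    simp only [endSt_append]
    rw [hzA, ← hst0, hCye, (hπ y (by omega)).2, hχend']
  have hcatY : catRuns π 0 y = catRuns π 0 x ++ (π x ++ catRuns π (x + 1) e) := by
    rw [show y = x + (e + 1) from by omega, catRuns_add π 0 x (e + 1)]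
    rw [show (0 : ℕ) + x = x from by omega]
    rfl
  have hcatE : catRuns π (x + 1) (e + 1) = catRuns π (x + 1) e ++ π y := by
    rw [catRuns_succ_right]
    congr 2
    omega
  have himgB : P.image (ρA.take m ++ (catRuns π 0 y ++ (π y ++ (χ ++ β))))
      = P.image (ρA.take m ++ (catRuns π 0 x ++ (π x ++ (χ ++
        (catRuns π (x + 1) (e + 1) ++ β))))) := by
    rw [hcatY, hcatE, hππ]
    simp only [image_append]
    abel
  have hBacc : P.Accepting (ρA.take m ++ (catRuns π 0 y ++ (π y ++ (χ ++ β)))) := by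
    refine ⟨rB1.isRun, ?_, ?_⟩
    · rw [lastState_eq_endSt, hendB, ← hendA]
      exact hfinA
    · rw [himgB]
      exact himgA
  have hBlang : List.replicate m ABC.c ++ (reps seg y ++ (seg ++ (List.replicate p ABC.a ++
      List.replicate J ABC.b))) ∈ P.Lang := ⟨_, hBacc, rB1.word_eq⟩
  rw [hLang] at hBlang
  rw [hseg] at hBlang
  exact E'neg.B_not_mem hp (by omega) hm_def hBlang

namespace E'pos
open PA

def Ev (k : Fin 4) : Fin 4 → ℕ := fun i => if i = k then 1 else 0

def Hbase : Fin 4 → ℕ := Ev 0 + Ev 2 + Ev 3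

def Hgen : Fin 2 → (Fin 4 → ℕ) := fun i => if i = 0 then Ev 0 + Ev 1 else Ev 2 + Ev 3

def HC : Set (Fin 4 → ℕ) := {x | ∃ cf : Fin 2 → ℕ, x = Hbase + ∑ i, cf i • Hgen i}

def Htrans : List (Fin 4 × (ABC × (Fin 4 → ℕ)) × Fin 4) :=
  [ (0, (ABC.c, Ev 0), 0),
    (0, (ABC.a, Ev 1), 1),
    (0, (ABC.b, Ev 1), 1),
    (0, (ABC.b, 0), 2),
    (1, (ABC.a, Ev 1), 1),
    (1, (ABC.b, Ev 1), 1),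
    (1, (ABC.b, 0), 2),
    (2, (ABC.a, Ev 2), 2),
    (2, (ABC.b, Ev 3), 3),
    (3, (ABC.b, Ev 3), 3) ]

@[reducible] def H : PA ABC 4 where
  n := 4
  init := 0
  final := {3}
  trans := {t | t ∈ Htrans}
  transFin := Htrans.finite_toSet
  C := HC
  hC := ⟨1, fun _ => HC, fun _ => ⟨2, Hbase, Hgen, rfl⟩, (Set.iUnion_const HC).symm⟩

lemma sum_gen (cf : Fin 2 → ℕ) :
    (Hbase + ∑ i, cf i • Hgen i)
      = fun i : Fin 4 => if i = 0 then 1 + cf 0 else if i = 1 then cf 0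
          else 1 + cf 1 := by
  funext i
  rw [Fin.sum_univ_two]
  fin_cases i <;> simp [Hbase, Hgen, Ev]

lemma memC_iff (v : Fin 4 → ℕ) :
    v ∈ HC ↔ v 0 = v 1 + 1 ∧ v 2 = v 3 ∧ 1 ≤ v 3 := by
  constructor
  · rintro ⟨cf, rfl⟩
    rw [sum_gen]
    simp
    omega
  · rintro ⟨h1, h2, h3⟩
    refine ⟨![v 1, v 3 - 1], ?_⟩
    rw [sum_gen]
    funext i
    fin_cases i <;> simp <;> omega

lemma mem_trans_iff (t : H.Tr) : t ∈ H.trans ↔ t ∈ Htrans := Iff.rfl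

lemma run3 : ∀ (ρ : List H.Tr) (w : List ABC), H.RunF 3 w ρ →
    w = List.replicate ρ.length ABC.b ∧ H.image ρ = ρ.length • Ev 3 ∧
      H.endSt 3 ρ = 3 := by
  intro ρ
  induction ρ with
  | nil =>
    intro w h
    rw [runF_nil] at h
    subst h
    exact ⟨by simp, by simp, rfl⟩
  | cons t l ih =>
    intro w h
    rw [runF_cons] at h
    obtain ⟨hmem, hsrc, hw, htail⟩ := h
    rw [mem_trans_iff] at hmem
    simp only [Htrans, List.mem_cons, List.mem_singleton, List.not_mem_nil, or_false] at hmem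
    rcases hmem with rfl|rfl|rfl|rfl|rfl|rfl|rfl|rfl|rfl|rfl <;>
      try exact absurd hsrc (by decide)
    obtain ⟨e1, e2, e3⟩ := ih (H.word l) htail
    subst hw
    refine ⟨?_, ?_, ?_⟩
    · rw [e1]
      simp [List.replicate_succ]
    · rw [image_cons, e2]
      simp only [List.length_cons, succ_nsmul]
      abel
    · rw [endSt_cons]
      exact e3

lemma run2 : ∀ (ρ : List H.Tr) (w : List ABC), H.RunF 2 w ρ → H.endSt 2 ρ = 3 →
    ∃ j k, 1 ≤ k ∧ w = List.replicate j ABC.a ++ List.replicate k ABC.b ∧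
      H.image ρ = j • Ev 2 + k • Ev 3 := by
  intro ρ
  induction ρ with
  | nil =>
    intro w h hend
    exact absurd hend (by decide)
  | cons t l ih =>
    intro w h hend
    rw [runF_cons] at h
    obtain ⟨hmem, hsrc, hw, htail⟩ := h
    rw [endSt_cons] at hend
    rw [mem_trans_iff] at hmem
    simp only [Htrans, List.mem_cons, List.mem_singleton, List.not_mem_nil, or_false] at hmem
    rcases hmem with rfl|rfl|rfl|rfl|rfl|rfl|rfl|rfl|rfl|rfl <;>
      try exact absurd hsrc (by decide)
    · -- (2, a, 2)
      obtain ⟨j, k, hk, e1, e2⟩ := ih (H.word l) htail hend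
      subst hw
      refine ⟨j + 1, k, hk, ?_, ?_⟩
      · rw [e1, List.replicate_succ]
        simp
      · rw [image_cons, e2]
        funext i
        fin_cases i <;>
          simp [Ev, succ_nsmul, Pi.add_apply, Pi.smul_apply, smul_eq_mul] <;>
          try omega
    · -- (2, b, 3)
      obtain ⟨e1, e2, e3⟩ := run3 l (H.word l) htail
      subst hw
      refine ⟨0, l.length + 1, by omega, ?_, ?_⟩
      · rw [e1]
        simp [List.replicate_succ]
      · rw [image_cons, e2]
        funext i
        fin_cases i <;>
          simp [Ev, succ_nsmul, Pi.add_apply, Pi.smul_apply, smul_eq_mul] <;>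
          try omega

lemma run1 : ∀ (ρ : List H.Tr) (w : List ABC), H.RunF 1 w ρ → H.endSt 1 ρ = 3 →
    ∃ u j k, 1 ≤ k ∧
      w = u ++ ([ABC.b] ++ (List.replicate j ABC.a ++ List.replicate k ABC.b)) ∧
      (∀ x ∈ u, x ≠ ABC.c) ∧
      H.image ρ = u.length • Ev 1 + (j • Ev 2 + k • Ev 3) := by
  intro ρ
  induction ρ with
  | nil =>
    intro w h hend
    exact absurd hend (by decide)
  | cons t l ih =>
    intro w h hend
    rw [runF_cons] at h
    obtain ⟨hmem, hsrc, hw, htail⟩ := h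
    rw [endSt_cons] at hend
    rw [mem_trans_iff] at hmem
    simp only [Htrans, List.mem_cons, List.mem_singleton, List.not_mem_nil, or_false] at hmem
    rcases hmem with rfl|rfl|rfl|rfl|rfl|rfl|rfl|rfl|rfl|rfl <;>
      try exact absurd hsrc (by decide)
    · -- (1, a, 1)
      obtain ⟨u, j, k, hk, e1, efree, e2⟩ := ih (H.word l) htail hend
      subst hw
      refine ⟨ABC.a :: u, j, k, hk, by rw [e1]; simp, ?_, ?_⟩
      · intro x hx
        rcases List.mem_cons.mp hx with rfl | hx
        · simp
        · exact efree x hx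
      · rw [image_cons, e2]
        funext i
        fin_cases i <;>
          simp [Ev, succ_nsmul, Pi.add_apply, Pi.smul_apply, smul_eq_mul] <;>
          try omega
    · -- (1, b, 1)
      obtain ⟨u, j, k, hk, e1, efree, e2⟩ := ih (H.word l) htail hend
      subst hw
      refine ⟨ABC.b :: u, j, k, hk, by rw [e1]; simp, ?_, ?_⟩
      · intro x hx
        rcases List.mem_cons.mp hx with rfl | hx
        · simp
        · exact efree x hx
      · rw [image_cons, e2]
        funext i
        fin_cases i <;>
          simp [Ev, succ_nsmul, Pi.add_apply, Pi.smul_apply, smul_eq_mul] <;>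
          try omega
    · -- (1, b, 2)
      obtain ⟨j, k, hk, e1, e2⟩ := run2 l (H.word l) htail hend
      subst hw
      refine ⟨[], j, k, hk, by rw [e1]; simp, by simp, ?_⟩
      · rw [image_cons, e2]
        simp

lemma run0 : ∀ (ρ : List H.Tr) (w : List ABC), H.RunF 0 w ρ → H.endSt 0 ρ = 3 →
    ∃ mc u j k, 1 ≤ k ∧
      w = List.replicate mc ABC.c ++
        (u ++ ([ABC.b] ++ (List.replicate j ABC.a ++ List.replicate k ABC.b))) ∧
      (∀ x ∈ u, x ≠ ABC.c) ∧
      H.image ρ = mc • Ev 0 + (u.length • Ev 1 + (j • Ev 2 + k • Ev 3)) := by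
  intro ρ
  induction ρ with
  | nil =>
    intro w h hend
    exact absurd hend (by decide)
  | cons t l ih =>
    intro w h hend
    rw [runF_cons] at h
    obtain ⟨hmem, hsrc, hw, htail⟩ := h
    rw [endSt_cons] at hend
    rw [mem_trans_iff] at hmem
    simp only [Htrans, List.mem_cons, List.mem_singleton, List.not_mem_nil, or_false] at hmem
    rcases hmem with rfl|rfl|rfl|rfl|rfl|rfl|rfl|rfl|rfl|rfl <;>
      try exact absurd hsrc (by decide)
    · -- (0, c, 0)
      obtain ⟨mc, u, j, k, hk, e1, efree, e2⟩ := ih (H.word l) htail hend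
      subst hw
      refine ⟨mc + 1, u, j, k, hk, by rw [e1]; simp [List.replicate_succ], efree, ?_⟩
      rw [image_cons, e2]
      simp only [succ_nsmul]
      abel
    · -- (0, a, 1)
      obtain ⟨u, j, k, hk, e1, efree, e2⟩ := run1 l (H.word l) htail hend
      subst hw
      refine ⟨0, ABC.a :: u, j, k, hk, by rw [e1]; simp, ?_, ?_⟩
      · intro x hx
        rcases List.mem_cons.mp hx with rfl | hx
        · simp
        · exact efree x hx
      · rw [image_cons, e2]
        funext i
        fin_cases i <;>
          simp [Ev, succ_nsmul, Pi.add_apply, Pi.smul_apply, smul_eq_mul] <;>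
          try omega
    · -- (0, b, 1)
      obtain ⟨u, j, k, hk, e1, efree, e2⟩ := run1 l (H.word l) htail hend
      subst hw
      refine ⟨0, ABC.b :: u, j, k, hk, by rw [e1]; simp, ?_, ?_⟩
      · intro x hx
        rcases List.mem_cons.mp hx with rfl | hx
        · simp
        · exact efree x hx
      · rw [image_cons, e2]
        funext i
        fin_cases i <;>
          simp [Ev, succ_nsmul, Pi.add_apply, Pi.smul_apply, smul_eq_mul] <;>
          try omega
    · -- (0, b, 2)
      obtain ⟨j, k, hk, e1, e2⟩ := run2 l (H.word l) htail hend
      subst hw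
      refine ⟨0, [], j, k, hk, by rw [e1]; simp, by simp, ?_⟩
      rw [image_cons, e2]
      simp

lemma image_eval (mc L j k : ℕ) :
    (mc • Ev 0 + (L • Ev 1 + (j • Ev 2 + k • Ev 3)) : Fin 4 → ℕ) 0 = mc ∧
    (mc • Ev 0 + (L • Ev 1 + (j • Ev 2 + k • Ev 3)) : Fin 4 → ℕ) 1 = L ∧
    (mc • Ev 0 + (L • Ev 1 + (j • Ev 2 + k • Ev 3)) : Fin 4 → ℕ) 2 = j ∧
    (mc • Ev 0 + (L • Ev 1 + (j • Ev 2 + k • Ev 3)) : Fin 4 → ℕ) 3 = k := by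
  refine ⟨?_, ?_, ?_, ?_⟩ <;> simp [Ev]

lemma lang_sub : H.Lang ⊆ E'Lang := by
  rintro w ⟨ρ, ⟨hrun, hfin, himg⟩, hword⟩
  have hR : H.RunF 0 w ρ := isRun_runF hrun hword
  have hend : H.endSt 0 ρ = 3 := by
    rw [lastState_eq_endSt] at hfin
    simpa using hfin
  obtain ⟨mc, u, j, k, hk, hw, hufree, himgeq⟩ := run0 ρ w hR hend
  rw [himgeq, memC_iff] at himg
  obtain ⟨h0, h1, h2, h3⟩ := image_eval mc u.length j k
  rw [h0, h1, h2, h3] at himg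
  refine ⟨mc, j, u, by omega, by omega, by omega, hufree, ?_⟩
  rw [hw, show k = j from by omega]
  simp [List.append_assoc]

-- generic iterResAux lemmas
lemma iterResAux_nil {A : Type} {d : ℕ} (P : PA A d) (r : List A → A → P.Tr)
    (pre : List A) : P.iterResAux r pre [] = [] := rfl

lemma iterResAux_cons {A : Type} {d : ℕ} (P : PA A d) (r : List A → A → P.Tr)
    (pre : List A) (x : A) (rest : List A) :
    P.iterResAux r pre (x :: rest) = r pre x :: P.iterResAux r (pre ++ [x]) rest := rfl

lemma iterResAux_append {A : Type} {d : ℕ} (P : PA A d) (r : List A → A → P.Tr)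
    (w₁ w₂ pre : List A) :
    P.iterResAux r pre (w₁ ++ w₂)
      = P.iterResAux r pre w₁ ++ P.iterResAux r (pre ++ w₁) w₂ := by
  induction w₁ generalizing pre with
  | nil => simp [iterResAux_nil]
  | cons x t ih =>
    rw [List.cons_append, iterResAux_cons, iterResAux_cons, ih, List.cons_append]
    congr 2
    simp

-- more generic run lemmas
lemma word_replicate {A : Type} {d : ℕ} {P : PA A d} (k : ℕ) (t : P.Tr) :
    P.word (List.replicate k t) = List.replicate k t.2.1.1 := by
  induction k with
  | zero => rfl
  | succ k ih => simp [List.replicate_succ, ih]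

lemma image_replicate {A : Type} {d : ℕ} {P : PA A d} (k : ℕ) (t : P.Tr) :
    P.image (List.replicate k t) = k • t.2.1.2 := by
  induction k with
  | zero => simp
  | succ k ih =>
    rw [List.replicate_succ, image_cons, ih, succ_nsmul]
    exact add_comm _ _

lemma endSt_replicate {A : Type} {d : ℕ} {P : PA A d} (k : ℕ) (t : P.Tr) (s : Fin P.n) :
    P.endSt s (List.replicate (k + 1) t) = t.2.2 := by
  induction k generalizing s with
  | zero => rfl
  | succ k ih =>
    rw [List.replicate_succ, endSt_cons]
    exact ih t.2.2

lemma runF_replicate_const {A : Type} {d : ℕ} {P : PA A d} {s : Fin P.n} {t : P.Tr}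
    (ht : t ∈ P.trans) (hx : t.1 = s) (hloop : t.2.2 = s) (k : ℕ) :
    P.RunF s (List.replicate k t.2.1.1) (List.replicate k t) := by
  induction k with
  | zero => exact runF_nil' s
  | succ k ih =>
    rw [List.replicate_succ, List.replicate_succ, runF_cons]
    refine ⟨ht, hx, ?_, ?_⟩
    · rw [word_replicate]
    · rw [word_replicate, hloop]
      exact ih

-- ======== the resolver ========

def rphase : List ABC → ABC → H.Tr
  | _, ABC.c => (0, (ABC.c, Ev 0), 0)
  | pre, ABC.a =>
      if pre.length = pre.count ABC.c then (0, (ABC.a, Ev 1), 1)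
      else if pre.length < 2 * pre.count ABC.c then (1, (ABC.a, Ev 1), 1)
      else (2, (ABC.a, Ev 2), 2)
  | pre, ABC.b =>
      if pre.length + 1 = 2 * pre.count ABC.c then
        (if pre.length = pre.count ABC.c then (0, (ABC.b, 0), 2) else (1, (ABC.b, 0), 2))
      else if pre.length = pre.count ABC.c then (0, (ABC.b, Ev 1), 1)
      else if pre.length < 2 * pre.count ABC.c then (1, (ABC.b, Ev 1), 1)
      else if ABC.b ∈ pre.drop (2 * pre.count ABC.c) then (3, (ABC.b, Ev 3), 3)
      else (2, (ABC.b, Ev 3), 3)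

@[simp] lemma rphase_c (pre : List ABC) : rphase pre ABC.c = (0, (ABC.c, Ev 0), 0) := rfl

lemma rphase_a (pre : List ABC) : rphase pre ABC.a =
    (if pre.length = pre.count ABC.c then (0, (ABC.a, Ev 1), 1)
      else if pre.length < 2 * pre.count ABC.c then (1, (ABC.a, Ev 1), 1)
      else (2, (ABC.a, Ev 2), 2)) := rfl

lemma rphase_b (pre : List ABC) : rphase pre ABC.b =
    (if pre.length + 1 = 2 * pre.count ABC.c then
        (if pre.length = pre.count ABC.c then (0, (ABC.b, 0), 2) else (1, (ABC.b, 0), 2))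
      else if pre.length = pre.count ABC.c then (0, (ABC.b, Ev 1), 1)
      else if pre.length < 2 * pre.count ABC.c then (1, (ABC.b, Ev 1), 1)
      else if ABC.b ∈ pre.drop (2 * pre.count ABC.c) then (3, (ABC.b, Ev 3), 3)
      else (2, (ABC.b, Ev 3), 3)) := rfl

-- ======== the explicit run ========

def ctr : H.Tr := (0, (ABC.c, Ev 0), 0)
def atr : H.Tr := (2, (ABC.a, Ev 2), 2)
def btr2 : H.Tr := (2, (ABC.b, Ev 3), 3)
def btr3 : H.Tr := (3, (ABC.b, Ev 3), 3)
def utr (x : ABC) : H.Tr := (1, (x, Ev 1), 1)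
def u0tr (x : ABC) : H.Tr := (0, (x, Ev 1), 1)

def uRun : List ABC → List H.Tr
  | [] => []
  | h :: t => u0tr h :: t.map utr

def mkTr (u : List ABC) : H.Tr := (if u.length = 0 then 0 else 1, (ABC.b, 0), 2)

def fullRun (mm nn : ℕ) (u : List ABC) : List H.Tr :=
  List.replicate mm ctr ++ (uRun u ++ ([mkTr u] ++
    (List.replicate nn atr ++ (btr2 :: List.replicate (nn - 1) btr3))))

-- counting lemmas
lemma count_pre (mm : ℕ) (v : List ABC) (hfree : ∀ x ∈ v, x ≠ ABC.c) :
    (List.replicate mm ABC.c ++ v).count ABC.c = mm := by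
  rw [List.count_append, List.count_replicate, List.count_eq_zero.mpr]
  · simp
  · intro h
    exact hfree ABC.c h rfl

lemma ph0 (k j : ℕ) : H.iterResAux rphase (List.replicate j ABC.c) (List.replicate k ABC.c)
    = List.replicate k ctr := by
  induction k generalizing j with
  | zero => rfl
  | succ k ih =>
    rw [List.replicate_succ, iterResAux_cons, rphase_c,
      show List.replicate j ABC.c ++ [ABC.c] = List.replicate (j + 1) ABC.c from
        (List.replicate_succ' (n := j) (a := ABC.c)).symm,
      ih (j + 1), List.replicate_succ]
    rfl

lemma ph1inner (mm : ℕ) : ∀ (t u₁ : List ABC), (∀ x ∈ u₁, x ≠ ABC.c) →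
    (∀ x ∈ t, x ≠ ABC.c) → 1 ≤ u₁.length → u₁.length + t.length + 1 ≤ mm →
    H.iterResAux rphase (List.replicate mm ABC.c ++ u₁) t = t.map utr := by
  intro t
  induction t with
  | nil => intro u₁ _ _ _ _; rfl
  | cons xh t' ih =>
    intro u₁ h₁ h₂ hlen hbound
    have hc : (List.replicate mm ABC.c ++ u₁).count ABC.c = mm := count_pre mm u₁ h₁
    have hl : (List.replicate mm ABC.c ++ u₁).length = mm + u₁.length := by simp
    simp only [List.length_cons] at hbound
    rw [iterResAux_cons]
    have hstep : rphase (List.replicate mm ABC.c ++ u₁) xh = utr xh := by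
      cases xh with
      | c => exact absurd rfl (h₂ ABC.c (by simp))
      | a =>
        rw [rphase_a, hc, hl, if_neg (by omega), if_pos (by omega)]
        rfl
      | b =>
        rw [rphase_b, hc, hl, if_neg (by omega), if_neg (by omega), if_pos (by omega)]
        rfl
    rw [hstep, List.append_assoc]
    rw [ih (u₁ ++ [xh])
      (by
        intro x hx
        rcases List.mem_append.mp hx with hx | hx
        · exact h₁ x hx
        · rw [List.mem_singleton.mp hx]
          exact h₂ xh (by simp))
      (fun x hx => h₂ x (by simp [hx]))
      (by simp)
      (by simp; omega)]
    rfl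

lemma ph1 {mm : ℕ} {u : List ABC} (hu : u.length = mm - 1)
    (hfree : ∀ x ∈ u, x ≠ ABC.c) :
    H.iterResAux rphase (List.replicate mm ABC.c) u = uRun u := by
  cases u with
  | nil => rfl
  | cons h t =>
    have hc : (List.replicate mm ABC.c).count ABC.c = mm := by simp
    have hl : (List.replicate mm ABC.c).length = mm := by simp
    simp only [List.length_cons] at hu
    have hmm2 : 2 ≤ mm := by omega
    rw [iterResAux_cons]
    have hstep : rphase (List.replicate mm ABC.c) h = u0tr h := by
      cases h with
      | c => exact absurd rfl (hfree ABC.c (by simp))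
      | a => rw [rphase_a, hc, hl, if_pos rfl]; rfl
      | b => rw [rphase_b, hc, hl, if_neg (by omega), if_pos rfl]; rfl
    rw [hstep,
      ph1inner mm t [h]
        (by
          intro x hx
          rw [List.mem_singleton.mp hx]
          exact hfree h (by simp))
        (fun x hx => hfree x (by simp [hx]))
        (by simp)
        (by simp; omega)]
    rfl

lemma ph2 {mm : ℕ} {u : List ABC} (hmm : 1 ≤ mm) (hu : u.length = mm - 1)
    (hfree : ∀ x ∈ u, x ≠ ABC.c) :
    rphase (List.replicate mm ABC.c ++ u) ABC.b = mkTr u := by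
  have hc : (List.replicate mm ABC.c ++ u).count ABC.c = mm := count_pre mm u hfree
  have hl : (List.replicate mm ABC.c ++ u).length = mm + u.length := by simp
  rw [rphase_b, hc, hl, if_pos (by omega)]
  by_cases h0 : u.length = 0
  · rw [if_pos (by omega)]
    rw [mkTr, if_pos h0]
  · rw [if_neg (by omega)]
    rw [mkTr, if_neg h0]

lemma ph3 {mm : ℕ} {u : List ABC} (hmm : 1 ≤ mm) (hu : u.length = mm - 1)
    (hfree : ∀ x ∈ u, x ≠ ABC.c) (k : ℕ) : ∀ j : ℕ,
    H.iterResAux rphase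
      (List.replicate mm ABC.c ++ (u ++ ([ABC.b] ++ List.replicate j ABC.a)))
      (List.replicate k ABC.a) = List.replicate k atr := by
  induction k with
  | zero => intro j; rfl
  | succ k ih =>
    intro j
    have hfree' : ∀ x ∈ u ++ ([ABC.b] ++ List.replicate j ABC.a), x ≠ ABC.c := by
      intro x hx
      rcases List.mem_append.mp hx with hx | hx
      · exact hfree x hx
      · rcases List.mem_append.mp hx with hx | hx
        · rw [List.mem_singleton.mp hx]; simp
        · rw [List.eq_of_mem_replicate hx]; simp
    have hc := count_pre mm _ hfree'
    have hl : (List.replicate mm ABC.c ++ (u ++ ([ABC.b] ++ List.replicate j ABC.a))).length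
        = mm + (u.length + (1 + j)) := by simp; try omega
    rw [List.replicate_succ, iterResAux_cons, rphase_a, hc, hl,
      if_neg (by omega), if_neg (by omega)]
    rw [show (List.replicate mm ABC.c ++ (u ++ ([ABC.b] ++ List.replicate j ABC.a))) ++ [ABC.a]
        = List.replicate mm ABC.c ++ (u ++ ([ABC.b] ++ List.replicate (j + 1) ABC.a)) from by
      rw [List.replicate_succ' (n := j) (a := ABC.a)]
      simp [List.append_assoc]]
    rw [ih (j + 1), List.replicate_succ]
    rfl

lemma ph4 {mm nn : ℕ} {u : List ABC} (hmm : 1 ≤ mm) (hu : u.length = mm - 1)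
    (hfree : ∀ x ∈ u, x ≠ ABC.c) :
    rphase (List.replicate mm ABC.c ++ (u ++ ([ABC.b] ++ List.replicate nn ABC.a)))
      ABC.b = btr2 := by
  have hfree' : ∀ x ∈ u ++ ([ABC.b] ++ List.replicate nn ABC.a), x ≠ ABC.c := by
    intro x hx
    rcases List.mem_append.mp hx with hx | hx
    · exact hfree x hx
    · rcases List.mem_append.mp hx with hx | hx
      · rw [List.mem_singleton.mp hx]; simp
      · rw [List.eq_of_mem_replicate hx]; simp
  have hc := count_pre mm _ hfree'
  have hl : (List.replicate mm ABC.c ++ (u ++ ([ABC.b] ++ List.replicate nn ABC.a))).length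
      = mm + (u.length + (1 + nn)) := by simp; try omega
  have hdrop : (List.replicate mm ABC.c ++ (u ++ ([ABC.b] ++ List.replicate nn ABC.a))).drop
      (2 * mm) = List.replicate nn ABC.a := by
    have hre : List.replicate mm ABC.c ++ (u ++ ([ABC.b] ++ List.replicate nn ABC.a))
        = (List.replicate mm ABC.c ++ u ++ [ABC.b]) ++ List.replicate nn ABC.a := by
      simp [List.append_assoc]
    have hXlen : (List.replicate mm ABC.c ++ u ++ [ABC.b]).length = 2 * mm := by
      simp
      omega
    rw [hre, ← hXlen, List.drop_left]
  rw [rphase_b, hc, hl, if_neg (by omega), if_neg (by omega), if_neg (by omega), hdrop,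
    if_neg (by simp [List.mem_replicate])]
  rfl

lemma ph5 {mm nn : ℕ} {u : List ABC} (hmm : 1 ≤ mm) (hu : u.length = mm - 1)
    (hfree : ∀ x ∈ u, x ≠ ABC.c) (k : ℕ) : ∀ j : ℕ, 1 ≤ j →
    H.iterResAux rphase
      (List.replicate mm ABC.c ++ (u ++ ([ABC.b] ++
        (List.replicate nn ABC.a ++ List.replicate j ABC.b))))
      (List.replicate k ABC.b) = List.replicate k btr3 := by
  induction k with
  | zero => intro j _; rfl
  | succ k ih =>
    intro j hj
    have hfree' : ∀ x ∈ u ++ ([ABC.b] ++ (List.replicate nn ABC.a ++ List.replicate j ABC.b)),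
        x ≠ ABC.c := by
      intro x hx
      rcases List.mem_append.mp hx with hx | hx
      · exact hfree x hx
      · rcases List.mem_append.mp hx with hx | hx
        · rw [List.mem_singleton.mp hx]; simp
        · rcases List.mem_append.mp hx with hx | hx
          · rw [List.eq_of_mem_replicate hx]; simp
          · rw [List.eq_of_mem_replicate hx]; simp
    have hc := count_pre mm _ hfree'
    have hl : (List.replicate mm ABC.c ++ (u ++ ([ABC.b] ++
        (List.replicate nn ABC.a ++ List.replicate j ABC.b)))).length
        = mm + (u.length + (1 + (nn + j))) := by simp; try omega
    have hdrop : (List.replicate mm ABC.c ++ (u ++ ([ABC.b] ++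
        (List.replicate nn ABC.a ++ List.replicate j ABC.b)))).drop (2 * mm)
        = List.replicate nn ABC.a ++ List.replicate j ABC.b := by
      have hre : List.replicate mm ABC.c ++ (u ++ ([ABC.b] ++
          (List.replicate nn ABC.a ++ List.replicate j ABC.b)))
          = (List.replicate mm ABC.c ++ u ++ [ABC.b]) ++
            (List.replicate nn ABC.a ++ List.replicate j ABC.b) := by
        simp [List.append_assoc]
      have hXlen : (List.replicate mm ABC.c ++ u ++ [ABC.b]).length = 2 * mm := by
        simp
        omega
      rw [hre, ← hXlen, List.drop_left]
    rw [List.replicate_succ, iterResAux_cons, rphase_b, hc, hl,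
      if_neg (by omega), if_neg (by omega), if_neg (by omega), hdrop,
      if_pos (by
        apply List.mem_append.mpr
        right
        rw [List.mem_replicate]
        exact ⟨by omega, rfl⟩)]
    rw [show (List.replicate mm ABC.c ++ (u ++ ([ABC.b] ++
        (List.replicate nn ABC.a ++ List.replicate j ABC.b)))) ++ [ABC.b]
        = List.replicate mm ABC.c ++ (u ++ ([ABC.b] ++
          (List.replicate nn ABC.a ++ List.replicate (j + 1) ABC.b))) from by
      rw [List.replicate_succ' (n := j) (a := ABC.b)]
      simp [List.append_assoc]]
    rw [ih (j + 1) (by omega), List.replicate_succ]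
    rfl

lemma iterRes_def {A : Type} {d : ℕ} (P : PA A d) (r : List A → A → P.Tr) (w : List A) :
    P.iterRes r w = P.iterResAux r [] w := rfl

lemma iterRes_full {mm nn : ℕ} {u : List ABC} (hmm : 1 ≤ mm) (hnn : 1 ≤ nn)
    (hu : u.length = mm - 1) (hfree : ∀ x ∈ u, x ≠ ABC.c) :
    H.iterRes rphase (List.replicate mm ABC.c ++ (u ++ ([ABC.b] ++
      (List.replicate nn ABC.a ++ List.replicate nn ABC.b)))) = fullRun mm nn u := by
  obtain ⟨nn', rfl⟩ : ∃ nn', nn = nn' + 1 := ⟨nn - 1, by omega⟩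
  rw [iterRes_def]
  rw [iterResAux_append H rphase (List.replicate mm ABC.c), List.nil_append]
  have h0 : H.iterResAux rphase [] (List.replicate mm ABC.c) = List.replicate mm ctr := by
    have := ph0 mm 0
    simpa using this
  rw [h0]
  rw [iterResAux_append H rphase u]
  rw [ph1 hu hfree]
  rw [iterResAux_append H rphase [ABC.b]]
  have h2 : H.iterResAux rphase (List.replicate mm ABC.c ++ u) [ABC.b] = [mkTr u] := by
    rw [iterResAux_cons, ph2 hmm hu hfree]
    rfl
  rw [h2]
  rw [iterResAux_append H rphase (List.replicate (nn' + 1) ABC.a)]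
  have hpre3 : (List.replicate mm ABC.c ++ u) ++ [ABC.b]
      = List.replicate mm ABC.c ++ (u ++ ([ABC.b] ++ List.replicate 0 ABC.a)) := by
    simp
  rw [hpre3, ph3 hmm hu hfree (nn' + 1) 0]
  rw [show List.replicate (nn' + 1) ABC.b = ABC.b :: List.replicate nn' ABC.b from
    List.replicate_succ]
  rw [iterResAux_cons]
  have hpre4 : (List.replicate mm ABC.c ++ (u ++ ([ABC.b] ++ List.replicate 0 ABC.a)))
        ++ List.replicate (nn' + 1) ABC.a
      = List.replicate mm ABC.c ++ (u ++ ([ABC.b] ++ List.replicate (nn' + 1) ABC.a)) := by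
    simp
  rw [hpre4, ph4 hmm hu hfree]
  have hpre5 : (List.replicate mm ABC.c ++ (u ++ ([ABC.b] ++ List.replicate (nn' + 1) ABC.a)))
        ++ [ABC.b]
      = List.replicate mm ABC.c ++ (u ++ ([ABC.b] ++
          (List.replicate (nn' + 1) ABC.a ++ List.replicate 1 ABC.b))) := by
    simp
  rw [hpre5, ph5 hmm hu hfree nn' 1 le_rfl]
  rw [fullRun]
  simp

lemma word_map_utr (t : List ABC) : H.word (t.map utr) = t := by
  induction t with
  | nil => rfl
  | cons x t' ih => simp [utr, ih]

lemma maprun (t : List ABC) (hfree : ∀ x ∈ t, x ≠ ABC.c) :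
    H.RunF 1 t (t.map utr) ∧ H.endSt 1 (t.map utr) = 1 := by
  induction t with
  | nil => exact ⟨runF_nil' _, rfl⟩
  | cons x t' ih =>
    obtain ⟨ih1, ih2⟩ := ih (fun z hz => hfree z (by simp [hz]))
    constructor
    · rw [List.map_cons, runF_cons]
      refine ⟨?_, rfl, ?_, ?_⟩
      · rw [mem_trans_iff]
        cases x with
        | c => exact absurd rfl (hfree ABC.c (by simp))
        | a => simp [Htrans, utr]
        | b => simp [Htrans, utr]
      · simp [utr, word_map_utr]
      · rw [word_map_utr]
        exact ih1
    · rw [List.map_cons, endSt_cons]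
      exact ih2

lemma urun (u : List ABC) (hfree : ∀ x ∈ u, x ≠ ABC.c) :
    H.RunF 0 u (uRun u) ∧
      H.endSt 0 (uRun u) = (if u.length = 0 then (0 : Fin 4) else 1) := by
  cases u with
  | nil => exact ⟨runF_nil' _, rfl⟩
  | cons h t =>
    obtain ⟨m1, m2⟩ := maprun t (fun z hz => hfree z (by simp [hz]))
    constructor
    · rw [uRun, runF_cons]
      refine ⟨?_, rfl, ?_, ?_⟩
      · rw [mem_trans_iff]
        cases h with
        | c => exact absurd rfl (hfree ABC.c (by simp))
        | a => simp [Htrans, u0tr]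
        | b => simp [Htrans, u0tr]
      · simp [u0tr, word_map_utr]
      · rw [word_map_utr]
        exact m1
    · rw [uRun, endSt_cons]
      rw [show (u0tr h).2.2 = (1 : Fin 4) from rfl, m2]
      simp

lemma mkrun (u : List ABC) :
    H.RunF (if u.length = 0 then (0 : Fin 4) else 1) [ABC.b] [mkTr u] ∧
      H.endSt (if u.length = 0 then (0 : Fin 4) else 1) [mkTr u] = 2 := by
  constructor
  · rw [runF_cons]
    refine ⟨?_, rfl, rfl, runF_nil' _⟩
    rw [mem_trans_iff]
    by_cases h0 : u.length = 0 <;> simp [mkTr, h0, Htrans]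
  · rfl

lemma crun (k : ℕ) : H.RunF 0 (List.replicate k ABC.c) (List.replicate k ctr) ∧
    H.endSt 0 (List.replicate k ctr) = 0 := by
  constructor
  · exact runF_replicate_const (by rw [mem_trans_iff]; simp [Htrans, ctr]) rfl rfl k
  · cases k with
    | zero => rfl
    | succ k => exact endSt_replicate k ctr 0

lemma arun (k : ℕ) : H.RunF 2 (List.replicate k ABC.a) (List.replicate k atr) ∧
    H.endSt 2 (List.replicate k atr) = 2 := by
  constructor
  · exact runF_replicate_const (by rw [mem_trans_iff]; simp [Htrans, atr]) rfl rfl k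
  · cases k with
    | zero => rfl
    | succ k => exact endSt_replicate k atr 2

lemma brun (nn' : ℕ) :
    H.RunF 2 (List.replicate (nn' + 1) ABC.b) (btr2 :: List.replicate nn' btr3) ∧
      H.endSt 2 (btr2 :: List.replicate nn' btr3) = 3 := by
  constructor
  · rw [List.replicate_succ, runF_cons]
    refine ⟨by rw [mem_trans_iff]; simp [Htrans, btr2], rfl, ?_, ?_⟩
    · simp [btr2, btr3, word_replicate]
    · rw [word_replicate]
      exact runF_replicate_const (by rw [mem_trans_iff]; simp [Htrans, btr3]) rfl rfl nn'
  · rw [endSt_cons]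
    cases nn' with
    | zero => rfl
    | succ k => exact endSt_replicate k btr3 _

lemma fullRun_runF {mm nn : ℕ} {u : List ABC} (hnn : 1 ≤ nn)
    (hfree : ∀ x ∈ u, x ≠ ABC.c) :
    H.RunF 0 (List.replicate mm ABC.c ++ (u ++ ([ABC.b] ++
      (List.replicate nn ABC.a ++ List.replicate nn ABC.b)))) (fullRun mm nn u) := by
  obtain ⟨nn', rfl⟩ : ∃ nn', nn = nn' + 1 := ⟨nn - 1, by omega⟩
  rw [fullRun]
  refine RunF.append (crun mm).1 ?_
  rw [(crun mm).2]
  refine RunF.append (urun u hfree).1 ?_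
  rw [(urun u hfree).2]
  refine RunF.append (mkrun u).1 ?_
  rw [(mkrun u).2]
  refine RunF.append (arun (nn' + 1)).1 ?_
  rw [(arun (nn' + 1)).2]
  have := (brun nn').1
  simpa using this

lemma fullRun_end {mm nn : ℕ} {u : List ABC} (hnn : 1 ≤ nn)
    (hfree : ∀ x ∈ u, x ≠ ABC.c) :
    H.endSt 0 (fullRun mm nn u) = 3 := by
  obtain ⟨nn', rfl⟩ : ∃ nn', nn = nn' + 1 := ⟨nn - 1, by omega⟩
  rw [fullRun]
  simp only [endSt_append]
  rw [(crun mm).2, (urun u hfree).2, (mkrun u).2, (arun (nn' + 1)).2]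
  simpa using (brun nn').2

lemma image_map_utr (t : List ABC) : H.image (t.map utr) = t.length • Ev 1 := by
  induction t with
  | nil => simp
  | cons x t' ih =>
    rw [List.map_cons, image_cons, ih]
    funext i
    fin_cases i <;>
      simp [Ev, utr, succ_nsmul, Pi.add_apply, Pi.smul_apply, smul_eq_mul] <;>
      try omega

lemma image_uRun (u : List ABC) : H.image (uRun u) = u.length • Ev 1 := by
  cases u with
  | nil => simp [uRun]
  | cons h t =>
    rw [uRun, image_cons, image_map_utr]
    funext i
    fin_cases i <;>
      simp [Ev, u0tr, succ_nsmul, Pi.add_apply, Pi.smul_apply, smul_eq_mul] <;>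
      try omega

lemma fullRun_img {mm nn : ℕ} {u : List ABC} (hmm : 1 ≤ mm) (hnn : 1 ≤ nn)
    (hu : u.length = mm - 1) : H.image (fullRun mm nn u) ∈ HC := by
  obtain ⟨nn', rfl⟩ : ∃ nn', nn = nn' + 1 := ⟨nn - 1, by omega⟩
  have he : H.image (fullRun mm (nn' + 1) u)
      = mm • Ev 0 + (u.length • Ev 1 + ((nn' + 1) • Ev 2 + (nn' + 1) • Ev 3)) := by
    rw [fullRun]
    simp only [image_append, image_replicate, image_cons, image_nil, image_uRun]
    funext i
    fin_cases i <;>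
      simp [Ev, ctr, atr, btr2, btr3, mkTr, succ_nsmul, Pi.add_apply, Pi.smul_apply,
        smul_eq_mul] <;>
      try omega
  rw [he, memC_iff]
  obtain ⟨h0, h1, h2, h3⟩ := image_eval mm u.length (nn' + 1) (nn' + 1)
  rw [h0, h1, h2, h3]
  omega

lemma fullRun_acc {mm nn : ℕ} {u : List ABC} (hmm : 1 ≤ mm) (hnn : 1 ≤ nn)
    (hu : u.length = mm - 1) (hfree : ∀ x ∈ u, x ≠ ABC.c) :
    H.Accepting (fullRun mm nn u) ∧
      H.word (fullRun mm nn u) = List.replicate mm ABC.c ++ (u ++ ([ABC.b] ++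
        (List.replicate nn ABC.a ++ List.replicate nn ABC.b))) := by
  have hr := fullRun_runF (mm := mm) hnn hfree
  refine ⟨⟨hr.isRun, ?_, fullRun_img hmm hnn hu⟩, hr.word_eq⟩
  rw [lastState_eq_endSt]
  show H.endSt 0 (fullRun mm nn u) ∈ ({3} : Set (Fin 4))
  rw [fullRun_end hnn hfree]
  rfl

lemma lang_eq : H.Lang = E'Lang := by
  apply Set.Subset.antisymm lang_sub
  rintro w ⟨mm, nn, u, hmm, hnn, hu, hfree, rfl⟩
  have hre : List.replicate mm ABC.c ++ u ++ [ABC.b] ++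
        List.replicate nn ABC.a ++ List.replicate nn ABC.b
      = List.replicate mm ABC.c ++ (u ++ ([ABC.b] ++
        (List.replicate nn ABC.a ++ List.replicate nn ABC.b))) := by
    simp [List.append_assoc]
  rw [hre]
  obtain ⟨hacc, hword⟩ := fullRun_acc hmm hnn hu hfree
  exact ⟨fullRun mm nn u, hacc, hword⟩

lemma H_hd : H.HistoryDeterministic := by
  refine ⟨rphase, ?_⟩
  intro w hw
  rw [lang_eq] at hw
  obtain ⟨mm, nn, u, hmm, hnn, hu, hfree, rfl⟩ := hw
  have hre : List.replicate mm ABC.c ++ u ++ [ABC.b] ++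
        List.replicate nn ABC.a ++ List.replicate nn ABC.b
      = List.replicate mm ABC.c ++ (u ++ ([ABC.b] ++
        (List.replicate nn ABC.a ++ List.replicate nn ABC.b))) := by
    simp [List.append_assoc]
  rw [hre, iterRes_full hmm hnn hu hfree]
  exact fullRun_acc hmm hnn hu hfree

end E'pos

/-- `E'` is accepted by a history-deterministic Parikh automaton but by no deterministic
Parikh automaton. -/
theorem E'_hdpa_not_dpa :
    (∃ (d : ℕ) (P : PA ABC d), P.HistoryDeterministic ∧ P.Lang = E'Lang) ∧
    ¬ ∃ (d : ℕ) (P : PA ABC d), P.Deterministic ∧ P.Lang = E'Lang :=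
  ⟨⟨4, E'pos.H, E'pos.H_hd, E'pos.lang_eq⟩, E'_not_dpa⟩
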